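/- Let (W,S) be a finite (spherical) Coxeter system with longest element w₀, and let φ be a weight function with φ(s) ≥ 0 for all s ∈ S. Then sup_{x∈W} φ(x) = φ(w₀), and the set of x ∈ W attaining this maximum equals the coset w₀ W_φ⁰, where W_φ⁰ is the parabolic subgroup generated by {s ∈ S : φ(s) = 0}. -/

import Mathlib

/-!
For a reflection `t`, the parity of the number of occurrences of `t` in the right inversion
sequence of a word for `w` does not depend on the word: it is read off from Bourbaki's
permutation representation of `W` on `W × ZMod 2`. This parity `ν(w, t)` is `1` exactly when
`ℓ (w * t) < ℓ w`, and it is a cocycle: `ν(w v, t) = ν(v, t) + ν(w, v t v⁻¹)`. A longest element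
`w₀` has every reflection as an inversion, so the cocycle shows that `ℓ (w₀ v s) < ℓ (w₀ v)`
whenever `ℓ (v s) > ℓ v`; by induction `ℓ (w₀ v) = ℓ w₀ - ℓ v`. Hence
`φ w₀ = φ x + φ (x⁻¹ w₀)` for a weight function `φ`, and as `φ` is a sum of nonnegative
generator weights along a reduced word, `φ x = φ w₀` exactly when a reduced word of `x⁻¹ w₀`
uses only generators of weight zero.
-/

open List

namespace CoxeterSystem

variable {B W : Type*} [Group W] {M : CoxeterMatrix B} (cs : CoxeterSystem M W)

theorem rightInvSeq_alternatingWord (i j : B) (n : ℕ) :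
    cs.rightInvSeq (alternatingWord i j n) =
      (range n).map fun k => (cs.simple j * cs.simple i) ^ (n - 1 - k) * cs.simple j := by
  induction n generalizing i j with
  | zero => simp [alternatingWord]
  | succ n ih =>
    rw [alternatingWord_succ, rightInvSeq_concat, ih j i, range_succ, map_append, map_map,
      concat_eq_append]
    congr 1
    · refine map_congr_left fun k hk => ?_
      have hexp : n + 1 - 1 - k = n - 1 - k + 1 := by
        have := mem_range.mp hk
        omega
      have hsemiconj : SemiconjBy (cs.simple j) (cs.simple i * cs.simple j)
          (cs.simple j * cs.simple i) := by
        simp [SemiconjBy, mul_assoc]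
      simp only [Function.comp_apply, MulAut.conj_apply, inv_simple, hexp, pow_succ]
      rw [← mul_assoc, ← mul_assoc, (hsemiconj.pow_right _).eq]
    · simp

section SignPerm

variable [DecidableEq W]

def simpleSignPerm (i : B) : Equiv.Perm (W × ZMod 2) :=
  Function.Involutive.toPerm
    (fun p => (cs.simple i * p.1 * cs.simple i, p.2 + if p.1 = cs.simple i then 1 else 0)) <| by
    rintro ⟨t, ε⟩
    have hconj : cs.simple i * t * cs.simple i = cs.simple i ↔ t = cs.simple i := by
      constructor
      · intro h
        simpa [mul_assoc] using congrArg (fun z => cs.simple i * z * cs.simple i) h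
      · rintro rfl
        simp
    ext
    · simp [mul_assoc]
    · simp only [hconj, add_assoc]
      split_ifs <;> decide +revert

@[simp]
theorem simpleSignPerm_apply (i : B) (t : W) (ε : ZMod 2) :
    cs.simpleSignPerm i (t, ε) =
      (cs.simple i * t * cs.simple i, ε + if t = cs.simple i then 1 else 0) :=
  rfl

def wordSignPerm (ω : List B) : Equiv.Perm (W × ZMod 2) := (ω.map cs.simpleSignPerm).prod

theorem wordSignPerm_apply (ω : List B) (t : W) (ε : ZMod 2) :
    cs.wordSignPerm ω (t, ε) =
      (cs.wordProd ω * t * (cs.wordProd ω)⁻¹, ε + (cs.rightInvSeq ω).count t) := by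
  induction ω generalizing ε with
  | nil => simp [wordSignPerm]
  | cons i ω ih =>
    have hcond : cs.wordProd ω * t * (cs.wordProd ω)⁻¹ = cs.simple i ↔
        (cs.wordProd ω)⁻¹ * cs.simple i * cs.wordProd ω = t := by
      constructor <;> intro h <;> rw [← h] <;> group
    simp only [wordSignPerm, map_cons, prod_cons, Equiv.Perm.mul_apply] at ih ⊢
    simp only [ih, simpleSignPerm_apply, hcond, rightInvSeq, count_cons, beq_iff_eq]
    ext
    · simp [wordProd_cons, mul_assoc]
    · split_ifs <;> push_cast <;> ring

theorem even_count_rightInvSeq_alternatingWord (i j : B) (t : W) :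
    Even ((cs.rightInvSeq (alternatingWord i j (2 * M i j))).count t) := by
  set m := M i j
  rw [rightInvSeq_alternatingWord, two_mul, range_add, map_append, count_append, map_map]
  -- the two halves of the sequence agree since `(s j * s i) ^ m = 1`
  convert Even.add_self _ using 3
  refine map_congr_left fun k hk => ?_
  have hk := mem_range.mp hk
  simp only [Function.comp_apply]
  rw [show m + m - 1 - k = m + (m - 1 - k) by omega,
    show m + m - 1 - (m + k) = m - 1 - k by omega, pow_add, simple_mul_simple_pow', one_mul]

theorem isLiftable_simpleSignPerm : M.IsLiftable cs.simpleSignPerm := by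
  intro i j
  have hpow : ∀ m : ℕ, (cs.simpleSignPerm i * cs.simpleSignPerm j) ^ m =
      cs.wordSignPerm (alternatingWord i j (2 * m)) := by
    intro m
    induction m with
    | zero => simp [alternatingWord, wordSignPerm]
    | succ m ih =>
      rw [show 2 * (m + 1) = 2 * m + 1 + 1 by ring, alternatingWord_succ', alternatingWord_succ',
        if_neg (by simp), if_pos (by simp), pow_succ', ih]
      simp [wordSignPerm, mul_assoc]
  rw [hpow]
  ext ⟨t, ε⟩
  · simp [wordSignPerm_apply, prod_alternatingWord_eq_mul_pow, simple_mul_simple_pow]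
  · obtain ⟨c, hc⟩ := cs.even_count_rightInvSeq_alternatingWord i j t
    simp [wordSignPerm_apply, hc, ← two_mul, CharTwo.two_eq_zero]

def signPermHom : W →* Equiv.Perm (W × ZMod 2) :=
  cs.lift ⟨cs.simpleSignPerm, cs.isLiftable_simpleSignPerm⟩

theorem signPermHom_wordProd (ω : List B) : cs.signPermHom (cs.wordProd ω) = cs.wordSignPerm ω := by
  simp [wordProd, signPermHom, wordSignPerm, map_list_prod, Function.comp_def]

/-- The parity of the number of occurrences of `t` in the right inversion sequence of any word
for `w` (see `inversionParity_wordProd`). -/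
def inversionParity (w t : W) : ZMod 2 := (cs.signPermHom w (t, 0)).2

theorem inversionParity_wordProd (ω : List B) (t : W) :
    cs.inversionParity (cs.wordProd ω) t = (cs.rightInvSeq ω).count t := by
  simp [inversionParity, signPermHom_wordProd, wordSignPerm_apply]

theorem signPermHom_apply (w t : W) (ε : ZMod 2) :
    cs.signPermHom w (t, ε) = (w * t * w⁻¹, ε + cs.inversionParity w t) := by
  obtain ⟨ω, rfl⟩ := cs.wordProd_surjective w
  simp [signPermHom_wordProd, wordSignPerm_apply, inversionParity_wordProd]

theorem inversionParity_mul (w v t : W) :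
    cs.inversionParity (w * v) t =
      cs.inversionParity v t + cs.inversionParity w (v * t * v⁻¹) := by
  have h := congrArg (fun f => (f (t, 0)).2) (map_mul cs.signPermHom w v)
  simp only [Equiv.Perm.mul_apply, signPermHom_apply, zero_add] at h
  exact h

theorem inversionParity_one (t : W) : cs.inversionParity 1 t = 0 := by
  simp [inversionParity]

theorem inversionParity_simple (i : B) (t : W) :
    cs.inversionParity (cs.simple i) t = if t = cs.simple i then 1 else 0 := by
  simp [inversionParity, signPermHom, lift_apply_simple]

theorem IsReflection.inversionParity_self {t : W} (ht : cs.IsReflection t) :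
    cs.inversionParity t t = 1 := by
  obtain ⟨u, i, rfl⟩ := ht
  have hconj : u⁻¹ * (u * cs.simple i * u⁻¹) * u⁻¹⁻¹ = cs.simple i := by group
  have hcancel := cs.inversionParity_mul u u⁻¹ (u * cs.simple i * u⁻¹)
  rw [mul_inv_cancel, inversionParity_one, hconj] at hcancel
  rw [inversionParity_mul, hconj, inversionParity_mul, inversionParity_simple, if_pos rfl,
    mul_inv_cancel_right]
  linear_combination -hcancel

theorem isRightInversion_of_inversionParity_eq_one {w t : W}
    (h : cs.inversionParity w t = 1) : cs.IsRightInversion w t := by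
  obtain ⟨ω, hω, rfl⟩ := cs.exists_isReduced w
  rw [inversionParity_wordProd] at h
  have hpos : 0 < (cs.rightInvSeq ω).count t := Nat.pos_of_ne_zero fun h0 => by simp [h0] at h
  exact cs.isRightInversion_of_mem_rightInvSeq hω (count_pos_iff.mp hpos)

theorem inversionParity_eq_zero_of_not_isRightInversion {w t : W}
    (h : ¬cs.IsRightInversion w t) : cs.inversionParity w t = 0 :=
  (by decide : ∀ a : ZMod 2, a ≠ 1 → a = 0) _
    (mt cs.isRightInversion_of_inversionParity_eq_one h)

theorem isRightInversion_iff_inversionParity_eq_one {w t : W} (ht : cs.IsReflection t) :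
    cs.IsRightInversion w t ↔ cs.inversionParity w t = 1 := by
  refine ⟨fun hwt => ?_, cs.isRightInversion_of_inversionParity_eq_one⟩
  have hcancel : w * t * t = w := by rw [mul_assoc, ht.mul_self, mul_one]
  have hshorter : ¬cs.IsRightInversion (w * t) t := fun h => by
    have := h.2
    rw [hcancel] at this
    exact absurd hwt.2 (by omega)
  calc cs.inversionParity w t = cs.inversionParity (w * t * t) t := by rw [hcancel]
    _ = cs.inversionParity t t + cs.inversionParity (w * t) (t * t * t⁻¹) :=
      cs.inversionParity_mul _ _ _
    _ = 1 := by
      rw [ht.inversionParity_self, mul_inv_cancel_right,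
        cs.inversionParity_eq_zero_of_not_isRightInversion hshorter, add_zero]

end SignPerm

theorem IsReflection.isRightInversion_of_forall_length_le {w₀ t : W}
    (hw₀ : ∀ x, cs.length x ≤ cs.length w₀) (ht : cs.IsReflection t) :
    cs.IsRightInversion w₀ t :=
  ⟨ht, lt_of_le_of_ne (hw₀ _) (ht.length_mul_left_ne w₀)⟩

theorem length_mul_add_length_of_forall_isRightInversion {w : W}
    (hw : ∀ t, cs.IsReflection t → cs.IsRightInversion w t) (v : W) :
    cs.length (w * v) + cs.length v = cs.length w := by
  classical
  induction hv : cs.length v generalizing v with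
  | zero => simp [cs.length_eq_zero_iff.mp hv]
  | succ n ih =>
    obtain ⟨i, hi⟩ := cs.exists_rightDescent_of_ne_one (w := v) fun h => by simp [h] at hv
    obtain ⟨u, rfl⟩ : ∃ u, u * cs.simple i = v := ⟨_, cs.simple_mul_simple_cancel_right i⟩
    rw [IsRightDescent, simple_mul_simple_cancel_right] at hi
    have hu_asc : ¬cs.IsRightInversion u (cs.simple i) := fun h => by have := h.2; omega
    have hu : cs.length u = n := by
      rcases cs.length_mul_simple u i with h | h <;> omega
    have hwu : cs.IsRightInversion (w * u) (cs.simple i) := by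
      rw [isRightInversion_iff_inversionParity_eq_one _ (cs.isReflection_simple i),
        inversionParity_mul, cs.inversionParity_eq_zero_of_not_isRightInversion hu_asc, zero_add,
        ← isRightInversion_iff_inversionParity_eq_one _ ((cs.isReflection_simple i).conj u)]
      exact hw _ ((cs.isReflection_simple i).conj u)
    have hwu_len := ih u hu
    have hwu_desc := hwu.2
    rw [← mul_assoc]
    rcases cs.length_mul_simple (w * u) i with h | h <;> omega

theorem length_add_length_inv_mul_of_forall_length_le {w₀ : W}
    (hw₀ : ∀ x, cs.length x ≤ cs.length w₀) (x : W) :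
    cs.length x + cs.length (x⁻¹ * w₀) = cs.length w₀ := by
  have h := cs.length_mul_add_length_of_forall_isRightInversion
    (fun t ht => ht.isRightInversion_of_forall_length_le cs hw₀) (w₀⁻¹ * x)
  rwa [mul_inv_cancel_left, ← cs.length_inv (w₀⁻¹ * x), mul_inv_rev, inv_inv] at h

def IsWeightFunction {A : Type*} [Add A] (φ : W → A) : Prop :=
  ∀ x y : W, cs.length (x * y) = cs.length x + cs.length y → φ (x * y) = φ x + φ y

namespace IsWeightFunction

variable {cs} {A : Type*} [AddCommGroup A] {φ : W → A} (hφ : cs.IsWeightFunction φ)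
include hφ

theorem map_one : φ 1 = 0 := by
  have h := hφ 1 1 (by simp)
  rwa [mul_one, left_eq_add] at h

theorem map_wordProd {ω : List B} (hω : cs.IsReduced ω) :
    φ (cs.wordProd ω) = (ω.map fun i => φ (cs.simple i)).sum := by
  induction ω with
  | nil => simp [hφ.map_one]
  | cons i ω ih =>
    have hω' : cs.IsReduced ω := by simpa using hω.drop 1
    have hlen : cs.length (cs.simple i * cs.wordProd ω) =
        cs.length (cs.simple i) + cs.length (cs.wordProd ω) := by
      rw [← wordProd_cons, hω, hω', length_simple, length_cons, add_comm]
    rw [wordProd_cons, hφ _ _ hlen, ih hω', map_cons, sum_cons]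

theorem map_mul_simple_of_eq_zero {i : B} (hi : φ (cs.simple i) = 0) (y : W) :
    φ (y * cs.simple i) = φ y := by
  rcases cs.length_mul_simple y i with h | h
  · rw [hφ _ _ (by rw [h, length_simple]), hi, add_zero]
  · have h' := hφ (y * cs.simple i) (cs.simple i)
      (by rw [simple_mul_simple_cancel_right, length_simple, h])
    rw [simple_mul_simple_cancel_right, hi, add_zero] at h'
    exact h'.symm

theorem map_mul_of_mem_closure {h : W}
    (hh : h ∈ Subgroup.closure {w | ∃ i, w = cs.simple i ∧ φ (cs.simple i) = 0}) (y : W) :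
    φ (y * h) = φ y := by
  induction hh using Subgroup.closure_induction generalizing y with
  | mem z hz =>
    obtain ⟨i, rfl, hi⟩ := hz
    exact hφ.map_mul_simple_of_eq_zero hi y
  | one => rw [mul_one]
  | mul a b _ _ iha ihb => rw [← mul_assoc, ihb, iha]
  | inv a _ iha => simpa using (iha (y * a⁻¹)).symm

theorem map_eq_add_map_inv_mul {w₀ : W} (hw₀ : ∀ x, cs.length x ≤ cs.length w₀) (x : W) :
    φ w₀ = φ x + φ (x⁻¹ * w₀) := by
  have hlen := cs.length_add_length_inv_mul_of_forall_length_le hw₀ x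
  rw [← hφ _ _ (by rw [mul_inv_cancel_left, hlen]), mul_inv_cancel_left]

variable [PartialOrder A] [IsOrderedAddMonoid A] (hpos : ∀ i, 0 ≤ φ (cs.simple i))
include hpos

theorem nonneg (x : W) : 0 ≤ φ x := by
  obtain ⟨ω, hω, rfl⟩ := cs.exists_isReduced x
  rw [hφ.map_wordProd hω]
  exact sum_nonneg (by simpa using fun i _ => hpos i)

theorem le_map_of_forall_length_le {w₀ : W} (hw₀ : ∀ x, cs.length x ≤ cs.length w₀) (x : W) :
    φ x ≤ φ w₀ := by
  rw [hφ.map_eq_add_map_inv_mul hw₀ x]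
  exact le_add_of_nonneg_right (hφ.nonneg hpos _)

theorem eq_zero_iff_mem_closure (u : W) :
    φ u = 0 ↔ u ∈ Subgroup.closure {w | ∃ i, w = cs.simple i ∧ φ (cs.simple i) = 0} := by
  refine ⟨fun hu => ?_, fun hu => by simpa [hφ.map_one] using hφ.map_mul_of_mem_closure hu 1⟩
  obtain ⟨ω, hω, rfl⟩ := cs.exists_isReduced u
  rw [hφ.map_wordProd hω] at hu
  have hzero : ∀ i ∈ ω, φ (cs.simple i) = 0 := fun i hi =>
    le_antisymm (hu ▸ single_le_sum (by simpa using fun j _ => hpos j) _ (mem_map_of_mem hi))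
      (hpos i)
  refine Subgroup.list_prod_mem _ fun w hw => ?_
  obtain ⟨i, hi, rfl⟩ := mem_map.mp hw
  exact Subgroup.subset_closure ⟨i, rfl, hzero i hi⟩

end IsWeightFunction

end CoxeterSystem

theorem spherical_bound_and_cell_general {B W : Type*} [Group W] {M : CoxeterMatrix B}
    (cs : CoxeterSystem M W)
    (w₀ : W) (hw₀ : ∀ x : W, cs.length x ≤ cs.length w₀)
    (φ : W → ℝ)
    (hφ : ∀ x y : W, cs.length (x * y) = cs.length x + cs.length y →
      φ (x * y) = φ x + φ y)
    (hpos : ∀ i : B, 0 ≤ φ (cs.simple i)) :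
    (∀ x : W, φ x ≤ φ w₀) ∧
      {x : W | φ x = φ w₀} =
        (fun y => w₀ * y) ''
          (Subgroup.closure {w : W | ∃ i : B, w = cs.simple i ∧ φ (cs.simple i) = 0} :
            Set W) := by
  have hφ : cs.IsWeightFunction φ := hφ
  refine ⟨hφ.le_map_of_forall_length_le hpos hw₀, Set.ext fun x => ?_⟩
  rw [Set.image_mul_left, Set.mem_preimage, SetLike.mem_coe, Set.mem_ofPred_eq,
    hφ.map_eq_add_map_inv_mul hw₀ x, left_eq_add, hφ.eq_zero_iff_mem_closure hpos,
    ← inv_mem_iff, mul_inv_rev, inv_inv]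

/-- Let `(W, S)` be a finite (spherical) Coxeter system with longest element `w₀`, and let `φ`
be a weight function on `(W, S)` with `φ s ≥ 0` for all `s ∈ S`. Then
`sup_{x ∈ W} φ x = φ w₀` (attained), and the set of `x ∈ W` attaining this maximum equals the
coset `w₀ W_φ⁰`, where `W_φ⁰` is the parabolic subgroup generated by
`{s ∈ S : φ s = 0}`. -/
theorem spherical_bound_and_cell {B W : Type*} [Group W] [Finite W] {M : CoxeterMatrix B}
    (cs : CoxeterSystem M W)
    (w₀ : W) (hw₀ : ∀ x : W, cs.length x ≤ cs.length w₀)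
    (φ : W → ℝ)
    (hφ : ∀ x y : W, cs.length (x * y) = cs.length x + cs.length y →
      φ (x * y) = φ x + φ y)
    (hpos : ∀ i : B, 0 ≤ φ (cs.simple i)) :
    (∀ x : W, φ x ≤ φ w₀) ∧
      {x : W | φ x = φ w₀} =
        (fun y => w₀ * y) ''
          (Subgroup.closure {w : W | ∃ i : B, w = cs.simple i ∧ φ (cs.simple i) = 0} :
            Set W) :=
  spherical_bound_and_cell_general cs w₀ hw₀ φ hφ hpos
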